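/- arXiv:math/0305114 — 3 statements merged into one kernel-verified Lean document; each statement's English description precedes it below -/
import Mathlib

section
/- Let X ≥ 2 and for each prime p set b_p = 2 h(log p / log X) (log p)/√p, where h(t) = max(1−|t|,0). Then ∑_{100 < p ≤ X} b_p² = (log X)²/3 + O(log X). -/
/-!
For 100 < p ≤ X we have 0 ≤ log p / log X ≤ 1, so b_p² = f(p) · log p / p with
f(t) = 4 (1 - log t / log X)² log t. This f vanishes at X and |f'(t)| ≤ 8 / t on [1, X].
Legendre's formula for log N! together with Chebyshev's bound θ(N) ≤ N log 4 gives Mertens'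
estimate ∑_{p ≤ N} log p / p = log N + O(1), so the partial sums of log p / p over 100 < p ≤ t are
log t + O(1). Abel summation then compares the sum with ∫₁^X f(t) dt / t = (log X)² / 3
(substitute u = log t / log X and use ∫₀¹ 4 u (1 - u)² du = 1/3); the error is
∫₁^X |f'(t)| O(1) dt = O(log X).
-/

open Real Finset MeasureTheory
open Nat (primesLE)
open scoped Nat

theorem log_factorial_eq_sum_primesLE (N : ℕ) :
    log (N ! : ℕ) = ∑ p ∈ primesLE N, (N !).factorization p * log p := by
  rw [log_nat_eq_sum_factorization]
  refine Finsupp.sum_of_support_subset _ (fun p hp ↦ ?_) _ (by simp)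
  rw [Nat.support_factorization, Nat.mem_primeFactors] at hp
  exact Nat.mem_primesLE.2 ⟨(Nat.Prime.dvd_factorial hp.1).1 hp.2.1, hp.1⟩

theorem log_factorial_le_mul_log (N : ℕ) : log (N ! : ℕ) ≤ N * log N := by
  rcases N.eq_zero_or_pos with rfl | hN
  · simp
  rw [← log_pow]
  exact log_le_log (by positivity) (mod_cast Nat.factorial_le_pow N)

theorem mul_log_sub_le_log_factorial {N : ℕ} (hN : N ≠ 0) : N * log N - N ≤ log (N ! : ℕ) := by
  have h := Stirling.le_log_factorial_stirling hN
  have : 0 ≤ log N := log_natCast_nonneg N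
  have : 0 ≤ log (2 * π) := log_nonneg (by linarith [pi_gt_three])
  linarith

theorem mul_sum_primesLE_log_div_sub_le_log_factorial (N : ℕ) :
    N * ∑ p ∈ primesLE N, log p / p - N * log 4 ≤ log (N ! : ℕ) := by
  have hθ : ∑ p ∈ primesLE N, log p ≤ N * log 4 := by
    rw [← Chebyshev.theta_eq_sum_primesLE_log, mul_comm]
    exact Chebyshev.theta_le_log4_mul_x N.cast_nonneg
  rw [log_factorial_eq_sum_primesLE, mul_sum]
  have hterm : ∀ p ∈ primesLE N, N * (log p / p) - log p ≤ (N !).factorization p * log p := by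
    intro p hp
    have hp := (Nat.mem_primesLE.1 hp).2
    have hdiv : N / p ≤ (N !).factorization p := by
      rw [Nat.factorization_factorial hp (Nat.lt_add_of_pos_right two_pos)]
      simpa using single_le_sum (f := fun i ↦ N / p ^ i) (fun _ _ ↦ Nat.zero_le _)
        (show 1 ∈ Ico 1 (Nat.log p N + 2) by simp)
    have hfloor : (N : ℝ) / p - 1 ≤ (N !).factorization p := by
      have h := Nat.sub_one_lt_floor ((N : ℝ) / p)
      rw [Nat.floor_div_eq_div] at h
      exact h.le.trans (mod_cast hdiv)
    calc N * (log p / p) - log p = ((N : ℝ) / p - 1) * log p := by field_simp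
      _ ≤ _ := mul_le_mul_of_nonneg_right hfloor (log_natCast_nonneg p)
  have := sum_le_sum hterm
  rw [sum_sub_distrib] at this
  linarith

theorem log_factorial_le_mul_sum_primesLE_log_div_pred (N : ℕ) :
    log (N ! : ℕ) ≤ N * ∑ p ∈ primesLE N, log p / (p - 1) := by
  rw [log_factorial_eq_sum_primesLE, mul_sum]
  refine sum_le_sum fun p hp ↦ ?_
  have hp := (Nat.mem_primesLE.1 hp).2
  have hp1 : (0 : ℝ) < p - 1 := by
    have : (2 : ℝ) ≤ p := mod_cast hp.two_le
    linarith
  have hle : ((N !).factorization p : ℝ) ≤ N / (p - 1) := by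
    have h := Nat.factorization_factorial_le_div_pred hp N
    calc ((N !).factorization p : ℝ) ≤ (N / (p - 1) : ℕ) := mod_cast h
      _ ≤ _ := by
        simpa [Nat.cast_sub hp.one_le] using Nat.cast_div_le (α := ℝ) (m := N) (n := p - 1)
  calc ((N !).factorization p : ℝ) * log p ≤ N / (p - 1) * log p :=
        mul_le_mul_of_nonneg_right hle (log_natCast_nonneg p)
    _ = N * (log p / (p - 1)) := by ring

theorem log_natCast_div_mul_pred_le (n : ℕ) :
    log n / (n * (n - 1)) ≤ 4 * ((n : ℝ) ^ (3 / 2 : ℝ))⁻¹ := by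
  rcases lt_or_ge n 2 with hn | hn
  · interval_cases n <;> simp
  have hn : (2 : ℝ) ≤ n := mod_cast hn
  have hlog : log n ≤ 2 * √n := by
    have := log_le_rpow_div (x := n) (by positivity) (ε := 1 / 2) (by norm_num)
    rw [← sqrt_eq_rpow] at this
    linarith
  have hpow : (n : ℝ) ^ (3 / 2 : ℝ) = n * √n := by
    rw [sqrt_eq_rpow, ← rpow_one_add' (by positivity) (by norm_num)]
    norm_num
  have hs : 0 < √(n : ℝ) := by positivity
  rw [hpow, div_le_iff₀ (by nlinarith), ← div_eq_mul_inv, div_mul_eq_mul_div,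
    le_div_iff₀ (by positivity)]
  have hss : √(n : ℝ) * √n = n := mul_self_sqrt (by positivity)
  nlinarith [mul_le_mul_of_nonneg_right hlog (by positivity : (0:ℝ) ≤ n * √n), hss]

theorem exists_sum_primesLE_log_div_mul_pred_le :
    ∃ K, ∀ N, ∑ p ∈ primesLE N, log p / (p * (p - 1)) ≤ K := by
  have hsum : Summable fun n : ℕ ↦ 4 * ((n : ℝ) ^ (3 / 2 : ℝ))⁻¹ :=
    (summable_nat_rpow_inv.2 (by norm_num)).mul_left 4
  refine ⟨∑' n : ℕ, 4 * ((n : ℝ) ^ (3 / 2 : ℝ))⁻¹, fun N ↦ ?_⟩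
  calc _ ≤ ∑ p ∈ primesLE N, 4 * ((p : ℝ) ^ (3 / 2 : ℝ))⁻¹ :=
        sum_le_sum fun p _ ↦ log_natCast_div_mul_pred_le p
    _ ≤ _ := hsum.sum_le_tsum _ fun _ _ ↦ by positivity

theorem exists_abs_sum_primesLE_log_div_sub_log_le :
    ∃ C, ∀ N : ℕ, |∑ p ∈ primesLE N, log p / p - log N| ≤ C := by
  obtain ⟨K, hK⟩ := exists_sum_primesLE_log_div_mul_pred_le
  have hK0 : 0 ≤ K := by simpa using hK 0
  have hlog4 : 0 ≤ log 4 := log_nonneg (by norm_num)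
  refine ⟨log 4 + 1 + K, fun N ↦ ?_⟩
  rcases N.eq_zero_or_pos with rfl | hN
  · simpa using (by linarith : 0 ≤ log 4 + 1 + K)
  have hN : (0 : ℝ) < N := mod_cast hN
  have hpred : ∑ p ∈ primesLE N, log p / (p - 1)
      = ∑ p ∈ primesLE N, log p / p + ∑ p ∈ primesLE N, log p / (p * (p - 1)) := by
    rw [← sum_add_distrib]
    refine sum_congr rfl fun p hp ↦ ?_
    have hp : (2 : ℝ) ≤ p := mod_cast (Nat.mem_primesLE.1 hp).2.two_le
    have : (p : ℝ) - 1 ≠ 0 := by linarith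
    field_simp
    ring
  have hlo := (mul_log_sub_le_log_factorial (N := N) (by positivity)).trans
    (log_factorial_le_mul_sum_primesLE_log_div_pred N)
  have hup := (mul_sum_primesLE_log_div_sub_le_log_factorial N).trans (log_factorial_le_mul_log N)
  rw [hpred] at hlo
  have hup' : (N : ℝ) * ∑ p ∈ primesLE N, log p / p ≤ N * (log N + log 4) := by linarith
  have hlo' : (N : ℝ) * (log N - 1 - K) ≤ N * ∑ p ∈ primesLE N, log p / p := by
    nlinarith [hK N]
  have := le_of_mul_le_mul_left hup' hN
  have := le_of_mul_le_mul_left hlo' hN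
  rw [abs_le]
  constructor <;> linarith

noncomputable def primeLogWeight (n₀ k : ℕ) : ℝ := if n₀ < k ∧ k.Prime then log k / k else 0

theorem primeLogWeight_zero (n₀ : ℕ) : primeLogWeight n₀ 0 = 0 := by
  simp [primeLogWeight, Nat.not_prime_zero]

theorem sum_Icc_mul_primeLogWeight (n₀ m : ℕ) (g : ℕ → ℝ) :
    ∑ k ∈ Icc 0 m, g k * primeLogWeight n₀ k = ∑ p ∈ Ioc n₀ m with p.Prime, g p * (log p / p) := by
  simp_rw [primeLogWeight, mul_ite, mul_zero]
  rw [← sum_filter]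
  refine sum_congr (ext fun k ↦ ?_) fun _ _ ↦ rfl
  simp only [mem_filter, mem_Icc, mem_Ioc, zero_le, true_and]
  tauto

theorem exists_abs_sum_primeLogWeight_sub_log_le (n₀ : ℕ) :
    ∃ E, ∀ t : ℝ, 1 ≤ t → |∑ k ∈ Icc 0 ⌊t⌋₊, primeLogWeight n₀ k - log t| ≤ E := by
  obtain ⟨C, hC⟩ := exists_abs_sum_primesLE_log_div_sub_log_le
  refine ⟨C + ∑ p ∈ primesLE n₀, log p / p + log 2, fun t ht ↦ ?_⟩
  set m := ⌊t⌋₊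
  have hweight := sum_Icc_mul_primeLogWeight n₀ m 1
  simp only [Pi.one_apply, one_mul] at hweight
  rw [hweight]
  have hm : (1 : ℝ) ≤ m := mod_cast (Nat.one_le_floor_iff t).2 ht
  have hmt : (m : ℝ) ≤ t := Nat.floor_le (by linarith)
  have htm : t ≤ 2 * m := by linarith [Nat.lt_floor_add_one t]
  have hsplit := sum_filter_add_sum_filter_not (primesLE m) (n₀ < ·) fun p ↦ log p / p
  have hbig : {p ∈ primesLE m | n₀ < p} = {p ∈ Ioc n₀ m | p.Prime} := by
    ext p
    simp only [mem_filter, Nat.mem_primesLE, mem_Ioc]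
    tauto
  have hsmall : ∑ p ∈ primesLE m with ¬n₀ < p, log p / p ≤ ∑ p ∈ primesLE n₀, log p / p := by
    refine sum_le_sum_of_subset_of_nonneg (fun p ↦ ?_) fun p _ _ ↦ by positivity
    simp only [mem_filter, Nat.mem_primesLE, not_lt]
    tauto
  have hsmall0 : 0 ≤ ∑ p ∈ primesLE m with ¬n₀ < p, log p / p := sum_nonneg fun p _ ↦ by positivity
  have hlogt : log t ≤ log m + log 2 := by
    rw [← log_mul (by positivity) (by positivity)]
    exact log_le_log (by positivity) (by linarith)
  have hlogm : log m ≤ log t := log_le_log (by positivity) hmt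
  have hlog2 : 0 ≤ log 2 := log_nonneg one_le_two
  have := abs_le.1 (hC m)
  rw [hbig] at hsplit
  rw [abs_le]
  constructor <;> linarith

theorem sum_mul_sub_integral_div_eq {c : ℕ → ℝ} (hc : c 0 = 0) {f f' : ℝ → ℝ} {b : ℝ}
    (hb : 1 ≤ b) (hf : ∀ t ∈ Set.Icc 1 b, HasDerivAt f (f' t) t)
    (hf' : ContinuousOn f' (Set.Icc 1 b)) (hfb : f b = 0) :
    ∑ k ∈ Icc 0 ⌊b⌋₊, f k * c k - ∫ t in 1..b, f t / t
      = -∫ t in Set.Ioc 1 b, f' t * (∑ k ∈ Icc 0 ⌊t⌋₊, c k - log t) := by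
  have hderiv : Set.EqOn (deriv f) f' (Set.Icc 1 b) := fun t ht ↦ (hf t ht).deriv
  have hf'_int : IntegrableOn f' (Set.Icc 1 b) := hf'.integrableOn_Icc
  have hlog : ContinuousOn log (Set.Icc 1 b) :=
    continuousOn_log.mono fun t ht ↦ (zero_lt_one.trans_le ht.1).ne'
  have habel := sum_mul_eq_sub_integral_mul₀ c hc b (fun t ht ↦ (hf t ht).differentiableAt)
    (hf'_int.congr_fun hderiv.symm measurableSet_Icc)
  have hS_int : IntegrableOn (fun t ↦ f' t * ∑ k ∈ Icc 0 ⌊t⌋₊, c k) (Set.Ioc 1 b) :=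
    (integrableOn_mul_sum_Icc c zero_le_one hf'_int).mono_set Set.Ioc_subset_Icc_self
  have hlog_int : IntegrableOn (fun t ↦ f' t * log t) (Set.Ioc 1 b) :=
    (hf'.mul hlog).integrableOn_Icc.mono_set Set.Ioc_subset_Icc_self
  have hparts : ∫ t in 1..b, f t / t = -∫ t in Set.Ioc 1 b, f' t * log t := by
    have hI : Set.uIcc 1 b = Set.Icc 1 b := Set.uIcc_of_le hb
    have h := intervalIntegral.integral_mul_deriv_eq_deriv_mul (u := log) (u' := fun t ↦ t⁻¹)
      (fun t ht ↦ hasDerivAt_log (zero_lt_one.trans_le (hI ▸ ht).1).ne') (fun t ht ↦ hf t (hI ▸ ht))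
      ((continuousOn_inv₀.mono fun t ht ↦ (zero_lt_one.trans_le (hI ▸ ht).1).ne').intervalIntegrable)
      (hI ▸ hf').intervalIntegrable
    rw [log_one, hfb, zero_mul, mul_zero, sub_zero, zero_sub] at h
    rw [← intervalIntegral.integral_of_le hb]
    simp_rw [div_eq_inv_mul, mul_comm (f' _), h, neg_neg]
  rw [habel, hfb, zero_mul, zero_sub, hparts, setIntegral_congr_fun measurableSet_Ioc
    (fun t ht ↦ by rw [hderiv (Set.Ioc_subset_Icc_self ht)])]
  simp_rw [mul_sub]
  rw [integral_sub hS_int hlog_int]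
  ring

theorem abs_sum_mul_sub_integral_div_le {c : ℕ → ℝ} (hc : c 0 = 0) {E : ℝ}
    (hE : ∀ t : ℝ, 1 ≤ t → |∑ k ∈ Icc 0 ⌊t⌋₊, c k - log t| ≤ E) {f f' : ℝ → ℝ} {A b : ℝ}
    (hb : 1 ≤ b) (hf : ∀ t ∈ Set.Icc 1 b, HasDerivAt f (f' t) t)
    (hf' : ContinuousOn f' (Set.Icc 1 b)) (hfb : f b = 0)
    (hA : ∀ t ∈ Set.Icc 1 b, |f' t| ≤ A / t) :
    |∑ k ∈ Icc 0 ⌊b⌋₊, f k * c k - ∫ t in 1..b, f t / t| ≤ A * E * log b := by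
  rw [sum_mul_sub_integral_div_eq hc hb hf hf' hfb, abs_neg]
  have hinv : IntegrableOn (fun t ↦ A * E * t⁻¹) (Set.Ioc 1 b) :=
    (((continuousOn_inv₀.mono fun t ht ↦ (zero_lt_one.trans_le ht.1).ne').integrableOn_Icc
      (a := 1) (b := b)).mono_set Set.Ioc_subset_Icc_self).const_mul _
  calc _ ≤ ∫ t in Set.Ioc 1 b, A * E * t⁻¹ := by
        rw [← norm_eq_abs]
        refine norm_integral_le_of_norm_le hinv <|
          (ae_restrict_iff' measurableSet_Ioc).2 <| .of_forall fun t ht ↦ ?_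
        have hA := hA t (Set.Ioc_subset_Icc_self ht)
        rw [norm_mul, norm_eq_abs, norm_eq_abs, mul_right_comm, ← div_eq_mul_inv]
        exact mul_le_mul hA (hE t ht.1.le) (abs_nonneg _) ((abs_nonneg _).trans hA)
    _ = A * E * log b := by
        rw [integral_const_mul, ← intervalIntegral.integral_of_le hb,
          integral_inv_of_pos one_pos (by linarith), div_one]

noncomputable def bpSqWeight (X t : ℝ) : ℝ := 4 * (1 - log t / log X) ^ 2 * log t

noncomputable def bpSqWeightDeriv (X t : ℝ) : ℝ :=
  4 / t * (1 - log t / log X) * (1 - 3 * (log t / log X))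

theorem bpSqWeight_self {X : ℝ} (hX : log X ≠ 0) : bpSqWeight X X = 0 := by
  simp [bpSqWeight, div_self hX]

theorem hasDerivAt_bpSqWeight {X t : ℝ} (hX : log X ≠ 0) (ht : t ≠ 0) :
    HasDerivAt (bpSqWeight X) (bpSqWeightDeriv X t) t := by
  have hlog := hasDerivAt_log ht
  refine (((((hlog.div_const (log X)).const_sub 1).pow 2).const_mul 4).mul hlog).congr_deriv ?_
  unfold bpSqWeightDeriv
  simp only [Pi.pow_apply, Nat.cast_ofNat, Nat.add_one_sub_one, pow_one]
  field_simp
  ring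

theorem continuousOn_bpSqWeightDeriv (X : ℝ) : ContinuousOn (bpSqWeightDeriv X) (Set.Ici 1) := by
  have h0 : ∀ t ∈ Set.Ici (1 : ℝ), t ≠ 0 := fun t ht ↦ (zero_lt_one.trans_le ht).ne'
  have hlog : ContinuousOn log (Set.Ici 1) := continuousOn_log.mono h0
  unfold bpSqWeightDeriv
  fun_prop (disch := assumption)

theorem abs_bpSqWeightDeriv_le {X t : ℝ} (hX : 0 < log X) (ht : 1 ≤ t) (htX : t ≤ X) :
    |bpSqWeightDeriv X t| ≤ 8 / t := by
  have ht0 : 0 < t := zero_lt_one.trans_le ht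
  set u := log t / log X
  have hu0 : 0 ≤ u := div_nonneg (log_nonneg ht) hX.le
  have hu1 : u ≤ 1 := (div_le_one hX).2 (log_le_log ht0 htX)
  have h1 : |1 - u| ≤ 1 := abs_le.2 ⟨by linarith, by linarith⟩
  have h3 : |1 - 3 * u| ≤ 2 := abs_le.2 ⟨by linarith, by linarith⟩
  rw [bpSqWeightDeriv, abs_mul, abs_mul, abs_of_pos (by positivity : 0 < 4 / t)]
  calc 4 / t * |1 - u| * |1 - 3 * u| ≤ 4 / t * 1 * 2 := by gcongr
    _ = 8 / t := by ring

theorem integral_bpSqWeight_div {X : ℝ} (hX : 1 < X) :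
    ∫ t in 1..X, bpSqWeight X t / t = log X ^ 2 / 3 := by
  have hL : log X ≠ 0 := (log_pos hX).ne'
  have hpos : ∀ t ∈ Set.uIcc 1 X, 0 < t := fun t ht ↦
    zero_lt_one.trans_le (Set.uIcc_of_le hX.le ▸ ht).1
  have hG : ∀ t ∈ Set.uIcc 1 X, HasDerivAt
      (fun t ↦ 2 * log t ^ 2 - 8 / (3 * log X) * log t ^ 3 + 1 / log X ^ 2 * log t ^ 4)
      (bpSqWeight X t / t) t := by
    intro t ht
    have hlog := hasDerivAt_log (hpos t ht).ne'
    refine ((((hlog.pow 2).const_mul 2).sub ((hlog.pow 3).const_mul _)).add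
      ((hlog.pow 4).const_mul _)).congr_deriv ?_
    unfold bpSqWeight
    field_simp
    ring
  have hcont : ContinuousOn (fun t ↦ bpSqWeight X t / t) (Set.uIcc 1 X) := by
    have hlog : ContinuousOn log (Set.uIcc 1 X) := continuousOn_log.mono fun t ht ↦ (hpos t ht).ne'
    unfold bpSqWeight
    exact ((continuousOn_const.mul ((continuousOn_const.sub (hlog.div_const _)).pow 2)).mul hlog).div
      continuousOn_id fun t ht ↦ (hpos t ht).ne'
  rw [intervalIntegral.integral_eq_sub_of_hasDerivAt hG hcont.intervalIntegrable, log_one]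
  field_simp
  ring

theorem sq_bp_eq_bpSqWeight_mul {X y : ℝ} (hX : 0 < log X) (hy : 1 ≤ y) (hyX : y ≤ X) :
    (2 * max (1 - |log y / log X|) 0 * log y / √y) ^ 2 = bpSqWeight X y * (log y / y) := by
  have hy0 : 0 < y := zero_lt_one.trans_le hy
  have hu0 : 0 ≤ log y / log X := div_nonneg (log_nonneg hy) hX.le
  have hu1 : log y / log X ≤ 1 := (div_le_one hX).2 (log_le_log hy0 hyX)
  rw [abs_of_nonneg hu0, max_eq_left (by linarith), div_pow, sq_sqrt hy0.le, bpSqWeight]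
  ring

/-- With b_p = 2h(log p/log X)(log p)/√p, h the triangle function,
∑_{100 < p ≤ X} b_p² = (log X)²/3 + O(log X). -/
theorem sum_bp_sq :
    ∃ C : ℝ, 0 < C ∧ ∀ X : ℝ, 2 ≤ X →
      |(∑ p ∈ (Finset.Ioc 100 ⌊X⌋₊).filter Nat.Prime,
          (2 * max (1 - |Real.log p / Real.log X|) 0 * Real.log p / Real.sqrt p) ^ 2)
        - (Real.log X) ^ 2 / 3| ≤ C * Real.log X := by
  obtain ⟨E, hE⟩ := exists_abs_sum_primeLogWeight_sub_log_le 100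
  have hE0 : 0 ≤ E := (abs_nonneg _).trans (hE 1 le_rfl)
  refine ⟨8 * E + 1, by positivity, fun X hX ↦ ?_⟩
  have hL : 0 < log X := log_pos (by linarith)
  have hsum : ∑ p ∈ Ioc 100 ⌊X⌋₊ with p.Prime, (2 * max (1 - |log p / log X|) 0 * log p / √p) ^ 2
      = ∑ k ∈ Icc 0 ⌊X⌋₊, bpSqWeight X k * primeLogWeight 100 k := by
    rw [sum_Icc_mul_primeLogWeight]
    refine sum_congr rfl fun p hp ↦ sq_bp_eq_bpSqWeight_mul hL ?_ ?_
    · exact mod_cast (mem_filter.1 hp).2.one_le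
    · exact (Nat.cast_le.2 (mem_Ioc.1 (mem_filter.1 hp).1).2).trans (Nat.floor_le (by linarith))
  rw [hsum, ← integral_bpSqWeight_div (by linarith)]
  calc _ ≤ 8 * E * log X := abs_sum_mul_sub_integral_div_le (primeLogWeight_zero 100) hE
          (by linarith) (fun t ht ↦ hasDerivAt_bpSqWeight hL.ne' (by linarith [ht.1]))
          ((continuousOn_bpSqWeightDeriv X).mono Set.Icc_subset_Ici_self) (bpSqWeight_self hL.ne')
          fun t ht ↦ abs_bpSqWeightDeriv_le hL ht.1 ht.2
    _ ≤ (8 * E + 1) * log X := by nlinarith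
end

section
/- Let X ≥ 2, h(t) = max(1−|t|,0), and define k(t) = (X h(t) − (X−1) h(t/(1−X^{−1}))) / (log X)². Then the Fourier transform of k is k̂(t) = (X/(log²X)) (sin²(πt) − sin²(π(1−X^{−1})t))/(π²t²), k is supported in [−1,1], ‖k‖_∞ ≪ (log X)^{−2}, and k(log p/log X) = (log X)^{−2} whenever p ≤ X^{1−1/X}. -/
/-!
Write `h` for the triangle function and `c = 1 - X⁻¹`, so that `X - 1 = X c`. The numerator
`X h(t) - X c h(t/c)` of the kernel equals `X (1 - |t|) - X (c - |t|) = X (1 - c) = 1` for `|t| ≤ c`,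
equals `X h(t) ≤ X (1 - c) = 1` for `c ≤ |t|`, and vanishes for `|t| ≥ 1`.

For `b ≠ 0`, evenness of `h` and the antiderivative `(1 - x/c) e^{bx}/b + e^{bx}/(c b²)` of
`(1 - x/c) e^{bx}` give `∫ e^{bx} h(x/c) dx = (e^{bc} + e^{-bc} - 2)/(c b²)`, which at `b = -2πit`
is `sin²(πct)/(cπ²t²)`; the transform of the kernel follows by linearity.
-/

open Real

/-- The kernel k(t) = (X h(t) − (X−1) h(t/(1−X⁻¹)))/(log X)², where h is the
triangle function. -/
noncomputable def kKernel (X t : ℝ) : ℝ :=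
  (X * max (1 - |t|) 0 - (X - 1) * max (1 - |t / (1 - X⁻¹)|) 0) / (Real.log X) ^ 2

open MeasureTheory Function Set Complex

noncomputable def triangle (x : ℝ) : ℝ := max (1 - |x|) 0

lemma triangle_neg (x : ℝ) : triangle (-x) = triangle x := by
  simp only [triangle, abs_neg]

lemma triangle_of_abs_le_one {x : ℝ} (hx : |x| ≤ 1) : triangle x = 1 - |x| :=
  max_eq_left (sub_nonneg.2 hx)

lemma triangle_of_one_le_abs {x : ℝ} (hx : 1 ≤ |x|) : triangle x = 0 :=
  max_eq_right (sub_nonpos.2 hx)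

lemma continuous_triangle : Continuous triangle := by
  unfold triangle; fun_prop

lemma triangle_div_of_le_abs {c x : ℝ} (hc : 0 < c) (hx : c ≤ |x|) : triangle (x / c) = 0 :=
  triangle_of_one_le_abs <| by rwa [abs_div, abs_of_pos hc, one_le_div hc]

lemma support_mul_triangle_div_subset (g : ℝ → ℂ) {c : ℝ} (hc : 0 < c) :
    support (fun x => g x * triangle (x / c)) ⊆ Ioo (-c) c := by
  refine (support_mul_subset_right _ _).trans fun x hx => ?_
  by_contra hx'
  rw [mem_Ioo, ← abs_lt, not_lt] at hx'
  simp [triangle_div_of_le_abs hc hx'] at hx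

lemma integrable_mul_triangle_div {g : ℝ → ℂ} (hg : Continuous g) {c : ℝ} (hc : 0 < c) :
    Integrable fun x => g x * triangle (x / c) :=
  (hg.mul (continuous_ofReal.comp (continuous_triangle.comp (continuous_id.div_const c))))
    |>.integrable_of_hasCompactSupport <| HasCompactSupport.of_support_subset_isCompact
      isCompact_Icc <| (support_mul_triangle_div_subset g hc).trans Ioo_subset_Icc_self

lemma triangle_div_of_mem_Icc {c x : ℝ} (hc : 0 < c) (hx : x ∈ Icc 0 c) :
    triangle (x / c) = 1 - x / c := by
  have hxc : 0 ≤ x / c := div_nonneg hx.1 hc.le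
  rw [triangle_of_abs_le_one (by rw [abs_of_nonneg hxc, div_le_one hc]; exact hx.2),
    abs_of_nonneg hxc]

lemma integral_cexp_mul_triangle_div_zero_left {b : ℂ} (hb : b ≠ 0) {c : ℝ} (hc : 0 < c) :
    ∫ x in (0 : ℝ)..c, cexp (b * x) * triangle (x / c)
      = (cexp (b * c) - 1 - b * c) / (c * b ^ 2) := by
  have hc' : (c : ℂ) ≠ 0 := ofReal_ne_zero.2 hc.ne'
  have hF : ∀ x : ℝ, HasDerivAt
      (fun x : ℝ => (1 - (x : ℂ) / c) * cexp (b * x) / b + cexp (b * x) / (c * b ^ 2))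
      ((1 - (x : ℂ) / c) * cexp (b * x)) x := by
    intro x
    have hx : HasDerivAt (fun x : ℝ => (x : ℂ)) 1 x := (hasDerivAt_id x).ofReal_comp
    have hexp := (hx.const_mul b).cexp
    refine ((((hx.div_const (c : ℂ)).const_sub 1).mul hexp).div_const b
      |>.add (hexp.div_const ((c : ℂ) * b ^ 2))).congr_deriv ?_
    field_simp
    ring
  have hcongr : EqOn (fun x : ℝ => cexp (b * x) * triangle (x / c))
      (fun x : ℝ => (1 - (x : ℂ) / c) * cexp (b * x)) (uIcc 0 c) := by
    intro x hx
    rw [uIcc_of_le hc.le] at hx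
    simp only [triangle_div_of_mem_Icc hc hx]
    push_cast
    ring
  rw [intervalIntegral.integral_congr hcongr,
    intervalIntegral.integral_eq_sub_of_hasDerivAt (fun x _ => hF x)
      (Continuous.intervalIntegrable (by fun_prop) 0 c)]
  push_cast
  simp only [zero_div, sub_zero, mul_zero, Complex.exp_zero, one_mul]
  field_simp
  ring

lemma integral_cexp_mul_triangle_div {b : ℂ} (hb : b ≠ 0) {c : ℝ} (hc : 0 < c) :
    ∫ x : ℝ, cexp (b * x) * triangle (x / c)
      = (cexp (b * c) + cexp (-(b * c)) - 2) / (c * b ^ 2) := by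
  have hint : Integrable fun x : ℝ => cexp (b * x) * triangle (x / c) :=
    integrable_mul_triangle_div (by fun_prop) hc
  have hleft : ∫ x in -c..0, cexp (b * x) * triangle (x / c)
      = ∫ x in (0 : ℝ)..c, cexp (-b * x) * triangle (x / c) := by
    simpa [neg_div, triangle_neg] using
      (intervalIntegral.integral_comp_neg (a := 0) (b := c)
        (fun x : ℝ => cexp (b * x) * triangle (x / c))).symm
  rw [← intervalIntegral.integral_eq_integral_of_support_subset
      ((support_mul_triangle_div_subset _ hc).trans Ioo_subset_Ioc_self),
    ← intervalIntegral.integral_add_adjacent_intervals hint.intervalIntegrable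
      hint.intervalIntegrable, hleft, integral_cexp_mul_triangle_div_zero_left hb hc,
    integral_cexp_mul_triangle_div_zero_left (neg_ne_zero.2 hb) hc]
  rw [neg_mul, neg_sq]
  ring

lemma fourierIntegral_triangle_div {c : ℝ} (hc : 0 < c) {t : ℝ} (ht : t ≠ 0) :
    ∫ x : ℝ, cexp (-2 * π * I * x * t) * triangle (x / c)
      = ((Real.sin (π * c * t)) ^ 2 / (c * π ^ 2 * t ^ 2) : ℝ) := by
  set θ : ℝ := π * c * t
  have hb : (-2 * π * t * I : ℂ) ≠ 0 := by simp [ht, pi_ne_zero]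
  have hexp : cexp (-2 * π * t * I * c) + cexp (-(-2 * π * t * I * c)) - 2
      = -4 * Complex.sin θ ^ 2 := by
    rw [show -2 * π * t * I * c = -(2 * (θ : ℂ)) * I by push_cast [θ]; ring,
      show -(-(2 * (θ : ℂ)) * I) = -(-(2 * (θ : ℂ))) * I by ring, ← two_cos, Complex.cos_neg,
      Complex.cos_two_mul_eq_one_sub]
    ring
  simp_rw [show ∀ x : ℝ, -2 * π * I * x * t = -2 * π * t * I * x from fun x => by ring]
  rw [integral_cexp_mul_triangle_div hb hc, hexp]
  push_cast [θ]
  field_simp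
  rw [I_sq]
  ring

section kKernel

variable {X : ℝ}

lemma kKernel_eq_triangle (t : ℝ) :
    kKernel X t = (X * triangle t - (X - 1) * triangle (t / (1 - X⁻¹))) / Real.log X ^ 2 :=
  rfl

lemma one_sub_inv_pos (hX : 1 < X) : 0 < 1 - X⁻¹ :=
  sub_pos.2 (inv_lt_one_of_one_lt₀ hX)

lemma sub_one_eq_mul_one_sub_inv (hX : X ≠ 0) : X - 1 = X * (1 - X⁻¹) := by
  field_simp

lemma kKernel_of_abs_le (hX : 1 < X) {t : ℝ} (ht : |t| ≤ 1 - X⁻¹) :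
    kKernel X t = (Real.log X ^ 2)⁻¹ := by
  have hX0 : X ≠ 0 := by positivity
  have hc := one_sub_inv_pos hX
  have htri : triangle t = 1 - |t| :=
    triangle_of_abs_le_one (ht.trans (sub_le_self _ (inv_nonneg.2 (by positivity))))
  have htri_div : triangle (t / (1 - X⁻¹)) = 1 - |t| / (1 - X⁻¹) := by
    rw [triangle_of_abs_le_one, abs_div, abs_of_pos hc]
    rwa [abs_div, abs_of_pos hc, div_le_one hc]
  suffices hnum : X * (1 - |t|) - X * (1 - X⁻¹) * (1 - |t| / (1 - X⁻¹)) = 1 by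
    rw [kKernel_eq_triangle, htri, htri_div, sub_one_eq_mul_one_sub_inv hX0, hnum, one_div]
  have hct : (1 - X⁻¹) * (|t| / (1 - X⁻¹)) = |t| := mul_div_cancel₀ _ hc.ne'
  linear_combination X * hct + mul_inv_cancel₀ hX0

lemma kKernel_of_le_abs (hX : 1 < X) {t : ℝ} (ht : 1 - X⁻¹ ≤ |t|) :
    kKernel X t = X * triangle t / Real.log X ^ 2 := by
  rw [kKernel_eq_triangle, triangle_div_of_le_abs (one_sub_inv_pos hX) ht, mul_zero, sub_zero]

lemma kKernel_of_one_le_abs (hX : 1 < X) {t : ℝ} (ht : 1 ≤ |t|) : kKernel X t = 0 := by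
  have hc : 1 - X⁻¹ ≤ |t| := (sub_le_self _ (inv_nonneg.2 (by positivity))).trans ht
  rw [kKernel_of_le_abs hX hc, triangle_of_one_le_abs ht, mul_zero, zero_div]

lemma abs_kKernel_le (hX : 1 < X) (t : ℝ) : |kKernel X t| ≤ 1 / Real.log X ^ 2 := by
  rcases le_or_gt |t| (1 - X⁻¹) with ht | ht
  · rw [kKernel_of_abs_le hX ht, one_div, abs_of_nonneg (by positivity)]
  have hX0 : 0 < X := by positivity
  have htri : triangle t ≤ X⁻¹ := max_le (by linarith) (by positivity)
  have hnum : X * triangle t ≤ 1 := by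
    calc X * triangle t ≤ X * X⁻¹ := by gcongr
      _ = 1 := mul_inv_cancel₀ hX0.ne'
  rw [kKernel_of_le_abs hX ht.le, abs_of_nonneg (by unfold triangle; positivity)]
  gcongr

lemma fourierIntegral_kKernel (hX : 1 < X) {t : ℝ} (ht : t ≠ 0) :
    ∫ x : ℝ, cexp (-2 * π * I * x * t) * (kKernel X x : ℝ)
      = ((X / Real.log X ^ 2) * (Real.sin (π * t) ^ 2 - Real.sin (π * (1 - X⁻¹) * t) ^ 2)
          / (π ^ 2 * t ^ 2) : ℝ) := by
  have hX0 : X ≠ 0 := by positivity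
  have hc := one_sub_inv_pos hX
  have he : Continuous fun x : ℝ => cexp (-2 * π * I * x * t) := by fun_prop
  have hsplit : ∀ x : ℝ, cexp (-2 * π * I * x * t) * (kKernel X x : ℝ)
      = ((X / Real.log X ^ 2 : ℝ) : ℂ) * (cexp (-2 * π * I * x * t) * triangle (x / 1))
        - (((X - 1) / Real.log X ^ 2 : ℝ) : ℂ)
          * (cexp (-2 * π * I * x * t) * triangle (x / (1 - X⁻¹))) := by
    intro x
    rw [kKernel_eq_triangle, div_one]
    push_cast
    ring
  rw [integral_congr_ae (Filter.Eventually.of_forall hsplit),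
    integral_sub ((integrable_mul_triangle_div he one_pos).const_mul _)
      ((integrable_mul_triangle_div he hc).const_mul _),
    integral_const_mul, integral_const_mul, fourierIntegral_triangle_div one_pos ht,
    fourierIntegral_triangle_div hc ht, sub_one_eq_mul_one_sub_inv hX0]
  norm_cast
  -- keeps `field_simp` from rewriting `1 - X⁻¹` as `(X - 1) / X`, which it cannot cancel
  generalize 1 - X⁻¹ = c at hc
  field_simp

lemma abs_log_div_log_le_one_sub_inv (hX : 1 < X) {p : ℝ} (hp : 1 ≤ p)
    (hpX : p ≤ X ^ (1 - 1 / X)) : |Real.log p / Real.log X| ≤ 1 - X⁻¹ := by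
  have hlogX := Real.log_pos hX
  have hlogp : Real.log p ≤ (1 - X⁻¹) * Real.log X := by
    simpa [Real.log_rpow (by positivity : 0 < X)] using
      Real.log_le_log (by positivity) hpX
  rw [abs_of_nonneg (div_nonneg (Real.log_nonneg hp) hlogX.le), div_le_iff₀ hlogX]
  exact hlogp

end kKernel

/-- Properties of the kernel k: its Fourier transform, support in [−1,1],
sup-norm bound ≪ (log X)⁻², and the value (log X)⁻² for p ≤ X^{1−1/X}. -/
theorem kKernel_properties :
    ∃ C : ℝ, 0 < C ∧ ∀ X : ℝ, 2 ≤ X →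
      (∀ t : ℝ, t ≠ 0 →
        (∫ x : ℝ, Complex.exp (-2 * π * Complex.I * x * t) * (kKernel X x : ℝ))
          = ((X / (Real.log X) ^ 2) *
              ((Real.sin (π * t)) ^ 2 - (Real.sin (π * (1 - X⁻¹) * t)) ^ 2)
                / (π ^ 2 * t ^ 2) : ℝ)) ∧
      (∀ t : ℝ, 1 < |t| → kKernel X t = 0) ∧
      (∀ t : ℝ, |kKernel X t| ≤ C / (Real.log X) ^ 2) ∧
      (∀ p : ℝ, 1 ≤ p → p ≤ X ^ (1 - 1 / X) →
        kKernel X (Real.log p / Real.log X) = ((Real.log X) ^ 2)⁻¹) := by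
  refine ⟨1, one_pos, fun X hX => ?_⟩
  have hX1 : 1 < X := by linarith
  exact ⟨fun t ht => fourierIntegral_kKernel hX1 ht,
    fun t ht => kKernel_of_one_le_abs hX1 ht.le,
    abs_kKernel_le hX1,
    fun p hp hpX => kKernel_of_abs_le hX1 (abs_log_div_log_le_one_sub_inv hX1 hp hpX)⟩
end

section
/- Let k(t) be as follows: k(t) = (X h(t) − (X−1) h(t/(1−1/X)))/(log X)² with h the triangle function. Then k̂(t) satisfies |k̂(t)| ≪ (X/(t² log²X)) · min(1, |t|) · min(1, |t|/X) for all real t ≠ 0, and consequently sup_t (1+|t|)^{1+δ} |k̂(t)| ≪ X^δ/(log X)² for any 0 < δ ≤ 1. -/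
open Real

/-- k̂(t) = (X/log²X)(sin²(πt) − sin²(π(1−X⁻¹)t))/(π²t²). -/
noncomputable def kHat (X t : ℝ) : ℝ :=
  X / (Real.log X) ^ 2 *
    ((Real.sin (π * t)) ^ 2 - (Real.sin (π * (1 - X⁻¹) * t)) ^ 2) / (π ^ 2 * t ^ 2)

lemma sinsq_diff (a b : ℝ) : sin a ^ 2 - sin b ^ 2 = sin (a + b) * sin (a - b) := by
  rw [sin_add, sin_sub]
  nlinarith [sin_sq_add_cos_sq a, sin_sq_add_cos_sq b]

lemma abs_sin_min (x : ℝ) : |sin x| ≤ min 1 |x| :=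
  le_min (abs_sin_le_one x) abs_sin_le_abs

lemma min_scale {c s u : ℝ} (hc : 1 ≤ c) (hu : u ≤ c * s) : min 1 u ≤ c * min 1 s := by
  rcases le_total 1 s with h | h
  · rw [min_eq_left h]; exact le_trans (min_le_left _ _) (by linarith)
  · rw [min_eq_right h]; exact le_trans (min_le_right _ _) hu

lemma two_rpow_le_four' {e : ℝ} (he : e ≤ 2) : (2:ℝ) ^ e ≤ 4 := by
  have h : (2:ℝ) ^ e ≤ (2:ℝ) ^ (2:ℝ) := rpow_le_rpow_of_exponent_le one_le_two he
  have h2 : (2:ℝ) ^ (2:ℝ) = 4 := by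
    rw [show (2:ℝ) = ((2:ℕ):ℝ) by norm_num, Real.rpow_natCast]; norm_num
  linarith

lemma kHat_part1 (X : ℝ) (hX : 2 ≤ X) (t : ℝ) (ht : t ≠ 0) :
    |kHat X t| ≤ 2 * (X / (t ^ 2 * (Real.log X) ^ 2)) * min 1 |t| * min 1 (|t| / X) := by
  have hX0 : (0:ℝ) < X := by linarith
  have hL : 0 < Real.log X := Real.log_pos (by linarith)
  have ht2 : 0 < t ^ 2 := by positivity
  have hXi : 0 < X⁻¹ := inv_pos.2 hX0
  have hXi1 : X⁻¹ ≤ 1 := by rw [inv_le_one_iff₀]; right; linarith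
  have hπ : (0:ℝ) < π := pi_pos
  set m1 := min 1 |t| with hm1
  set m2 := min 1 (|t| / X) with hm2
  have key : |sin (π*t) ^ 2 - sin (π*(1-X⁻¹)*t) ^ 2| ≤ (2*π*m1) * (π*m2) := by
    rw [sinsq_diff, abs_mul]
    have h1 : |sin (π*t + π*(1-X⁻¹)*t)| ≤ 2*π*m1 := by
      refine (abs_sin_min _).trans (min_scale (by nlinarith [pi_gt_three]) ?_)
      have e1 : π*t + π*(1-X⁻¹)*t = (π*(2-X⁻¹))*t := by ring
      rw [e1, abs_mul]
      have h : |π*(2-X⁻¹)| = π*(2-X⁻¹) := abs_of_pos (by nlinarith)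
      rw [h]
      have h' : π*(2-X⁻¹) ≤ 2*π := by nlinarith
      exact mul_le_mul_of_nonneg_right h' (abs_nonneg t)
    have h2 : |sin (π*t - π*(1-X⁻¹)*t)| ≤ π*m2 := by
      refine (abs_sin_min _).trans (min_scale (by nlinarith [pi_gt_three]) ?_)
      have e1 : π*t - π*(1-X⁻¹)*t = (π*X⁻¹)*t := by ring
      rw [e1, abs_mul]
      have h : |π*X⁻¹| = π*X⁻¹ := abs_of_pos (by positivity)
      rw [h, div_eq_mul_inv]
      exact le_of_eq (by ring)
    exact mul_le_mul h1 h2 (abs_nonneg _) (by positivity)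
  have habs : |kHat X t| = X / (Real.log X)^2 *
      |sin (π*t) ^ 2 - sin (π*(1-X⁻¹)*t) ^ 2| / (π^2 * t^2) := by
    unfold kHat
    rw [abs_div, abs_mul, abs_of_pos (by positivity : (0:ℝ) < X / (Real.log X)^2),
      abs_of_pos (by positivity : (0:ℝ) < π^2 * t^2)]
  rw [habs]
  calc X / (Real.log X)^2 * |sin (π*t) ^ 2 - sin (π*(1-X⁻¹)*t) ^ 2| / (π^2 * t^2)
      ≤ X / (Real.log X)^2 * ((2*π*m1) * (π*m2)) / (π^2 * t^2) := by gcongr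
    _ = 2 * (X / (t ^ 2 * (Real.log X) ^ 2)) * m1 * m2 := by field_simp

lemma kHat_aux (X s δ : ℝ) (hX : 2 ≤ X) (hs : 0 < s) (hδ : 0 < δ) (hδ1 : δ ≤ 1) :
    (1+s) ^ (1+δ) * (X / s^2 * min 1 s * min 1 (s/X)) ≤ 4 * X ^ δ := by
  have hX0 : (0:ℝ) < X := by linarith
  have hd2 : 1 + δ ≤ 2 := by linarith
  have hXd1 : (1:ℝ) ≤ X ^ δ := by
    rw [show (1:ℝ) = X ^ (0:ℝ) by simp]
    exact rpow_le_rpow_of_exponent_le (by linarith) hδ.le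
  rcases le_total s 1 with h1 | h1
  · have hm1 : min 1 s = s := min_eq_right h1
    have hm2 : min 1 (s/X) = s/X := min_eq_right (by rw [div_le_one hX0]; linarith)
    rw [hm1, hm2]
    have heq : X / s^2 * s * (s/X) = 1 := by field_simp
    rw [heq, mul_one]
    calc (1+s) ^ (1+δ) ≤ (2:ℝ) ^ (1+δ) :=
          rpow_le_rpow (by linarith) (by linarith) (by linarith)
      _ ≤ 4 := two_rpow_le_four' hd2
      _ ≤ 4 * X ^ δ := by nlinarith
  · rcases le_total s X with h2 | h2
    · have hm1 : min 1 s = 1 := min_eq_left h1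
      have hm2 : min 1 (s/X) = s/X := min_eq_right (by rw [div_le_one hX0]; linarith)
      rw [hm1, hm2]
      have heq : X / s^2 * 1 * (s/X) = 1/s := by field_simp
      rw [heq]
      have key : (1+s) ^ (1+δ) ≤ 4 * (s * s ^ δ) := by
        calc (1+s) ^ (1+δ) ≤ (2*s) ^ (1+δ) :=
              rpow_le_rpow (by linarith) (by linarith) (by linarith)
          _ = 2 ^ (1+δ) * s ^ (1+δ) := mul_rpow (by norm_num) hs.le
          _ ≤ 4 * s ^ (1+δ) := by
              have := rpow_nonneg hs.le (1+δ)
              nlinarith [two_rpow_le_four' hd2]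
          _ = 4 * (s * s ^ δ) := by rw [rpow_add hs, rpow_one]
      calc (1+s) ^ (1+δ) * (1/s) ≤ (4 * (s * s ^ δ)) * (1/s) :=
            mul_le_mul_of_nonneg_right key (by positivity)
        _ = 4 * s ^ δ := by field_simp
        _ ≤ 4 * X ^ δ := by
            have := rpow_le_rpow hs.le h2 hδ.le
            linarith
    · have hm1 : min 1 s = 1 := min_eq_left (by linarith)
      have hm2 : min 1 (s/X) = 1 := min_eq_left ((one_le_div hX0).2 h2)
      rw [hm1, hm2]
      have key : (1+s) ^ (1+δ) ≤ 4 * (s^2 * s ^ (δ-1)) := by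
        calc (1+s) ^ (1+δ) ≤ (2*s) ^ (1+δ) :=
              rpow_le_rpow (by linarith) (by linarith) (by linarith)
          _ = 2 ^ (1+δ) * s ^ (1+δ) := mul_rpow (by norm_num) hs.le
          _ ≤ 4 * s ^ (1+δ) := by
              have := rpow_nonneg hs.le (1+δ)
              nlinarith [two_rpow_le_four' hd2]
          _ = 4 * (s^2 * s ^ (δ-1)) := by
              rw [show (1+δ) = 2+(δ-1) by ring, rpow_add hs,
                show (2:ℝ) = ((2:ℕ):ℝ) by norm_num, Real.rpow_natCast]
      have key2 : s ^ (δ-1) ≤ X ^ (δ-1) := by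
        have h3 : X ^ (1-δ) ≤ s ^ (1-δ) := rpow_le_rpow hX0.le h2 (by linarith)
        rw [show δ-1 = -(1-δ) by ring, rpow_neg hs.le, rpow_neg hX0.le]
        exact inv_anti₀ (rpow_pos_of_pos hX0 _) h3
      calc (1+s) ^ (1+δ) * (X/s^2 * 1 * 1) = (1+s) ^ (1+δ) * X / s^2 := by ring
        _ ≤ (4 * (s^2 * s ^ (δ-1))) * X / s^2 := by gcongr
        _ = 4 * s ^ (δ-1) * X := by field_simp
        _ ≤ 4 * X ^ (δ-1) * X := by nlinarith
        _ = 4 * X ^ δ := by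
            rw [mul_assoc, ← Real.rpow_add_one hX0.ne']
            ring_nf

/-- Bounds for k̂: |k̂(t)| ≪ (X/(t² log²X)) min(1,|t|) min(1,|t|/X), and hence
sup_t (1+|t|)^{1+δ} |k̂(t)| ≪ X^δ/(log X)² for 0 < δ ≤ 1. -/
theorem kHat_bounds :
    (∃ C : ℝ, 0 < C ∧ ∀ X : ℝ, 2 ≤ X → ∀ t : ℝ, t ≠ 0 →
      |kHat X t| ≤ C * (X / (t ^ 2 * (Real.log X) ^ 2)) * min 1 |t| * min 1 (|t| / X)) ∧
    ∀ δ : ℝ, 0 < δ → δ ≤ 1 → ∃ C : ℝ, 0 < C ∧ ∀ X : ℝ, 2 ≤ X → ∀ t : ℝ,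
      (1 + |t|) ^ (1 + δ) * |kHat X t| ≤ C * X ^ δ / (Real.log X) ^ 2 := by
  constructor
  · exact ⟨2, by norm_num, kHat_part1⟩
  · intro δ hδ hδ1
    refine ⟨8, by norm_num, ?_⟩
    intro X hX t
    have hX0 : (0:ℝ) < X := by linarith
    have hL : 0 < Real.log X := Real.log_pos (by linarith)
    have hXd : (0:ℝ) < X ^ δ := rpow_pos_of_pos hX0 δ
    by_cases ht : t = 0
    · subst ht
      simp only [kHat, abs_zero, ne_eq]
      norm_num
      positivity
    · have hs : 0 < |t| := abs_pos.2 ht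
      have step1 : (1 + |t|) ^ (1+δ) * |kHat X t| ≤
          (1 + |t|) ^ (1+δ) * (2 * (X / (t ^ 2 * (Real.log X) ^ 2)) * min 1 |t| * min 1 (|t| / X)) :=
        mul_le_mul_of_nonneg_left (kHat_part1 X hX t ht) (rpow_nonneg (by positivity) _)
      have ht2 : t ^ 2 = |t| ^ 2 := (sq_abs t).symm
      have step2 : (1 + |t|) ^ (1+δ) * (2 * (X / (t ^ 2 * (Real.log X) ^ 2)) * min 1 |t| * min 1 (|t| / X))
          = 2 / (Real.log X) ^ 2 *
            ((1 + |t|) ^ (1+δ) * (X / |t| ^ 2 * min 1 |t| * min 1 (|t| / X))) := by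
        rw [ht2]; field_simp
      have step3 := kHat_aux X |t| δ hX hs hδ hδ1
      calc (1 + |t|) ^ (1+δ) * |kHat X t|
          ≤ 2 / (Real.log X) ^ 2 *
            ((1 + |t|) ^ (1+δ) * (X / |t| ^ 2 * min 1 |t| * min 1 (|t| / X))) := by
            rw [← step2]; exact step1
        _ ≤ 2 / (Real.log X) ^ 2 * (4 * X ^ δ) :=
            mul_le_mul_of_nonneg_left step3 (by positivity)
        _ = 8 * X ^ δ / (Real.log X) ^ 2 := by ring
end
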